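/- arXiv:2604.17339 — 3 statements merged into one kernel-verified Lean document; each statement's English description precedes it below -/
import Mathlib

section
/- Combinatorial core of Theorem 1 (distance-three fault tolerance of the cut-cat gadget): let m ≥ 3 and use the minimum-weight decoder with parameter t = 1. For every fault pattern F with w(F) ≤ 1, the residual data error e(F) + c (coordinatewise mod-2 sum of the data error and the decoder's correction) has Hamming weight at most w(F); in particular a single fault never leaves a data error of weight greater than one after correction. -/
open scoped Classical

namespace CutCat

/-- A fault in the cut-cat single-round fault model, located at cat qubit `r`. -/
inductive Fault (m : ℕ) where
  | pre  (r : ZMod m)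
  | mid  (r : ZMod m)
  | post (r : ZMod m)
  | meas (r : ZMod m)

variable {m : ℕ}

/-- The index (in `ZMod (2*m)`) of the data qubit `2r` coupled to cat qubit `r`. -/
def d0 (r : ZMod m) : ZMod (2 * m) := 2 * (r.val : ZMod (2 * m))

/-- The data-qubit error contributed by a single fault. -/
def Fault.dataErr : Fault m → ZMod (2 * m) → ZMod 2
  | .pre r  => fun q => (if q = d0 r then 1 else 0) + (if q = d0 r + 1 then 1 else 0)
  | .mid r  => fun q => if q = d0 r + 1 then 1 else 0
  | .post _ => 0
  | .meas _ => 0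

/-- The cat-stabilizer syndrome contribution of a single fault
    (syndrome bit `j` checks cat qubits `j` and `j+1`). -/
def Fault.syn : Fault m → ZMod m → ZMod 2
  | .pre r  => fun j => (if j = r - 1 then 1 else 0) + (if j = r then 1 else 0)
  | .mid r  => fun j => (if j = r - 1 then 1 else 0) + (if j = r then 1 else 0)
  | .post r => fun j => (if j = r - 1 then 1 else 0) + (if j = r then 1 else 0)
  | .meas r => fun j => if j = r then 1 else 0

/-- The data error `e(F)` of a fault pattern `F` (coordinatewise mod-2 sum). -/
def dataErr (F : Multiset (Fault m)) : ZMod (2 * m) → ZMod 2 :=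
  (F.map Fault.dataErr).sum

/-- The observed syndrome `s(F)` of a fault pattern `F` (coordinatewise mod-2 sum). -/
def synd (F : Multiset (Fault m)) : ZMod m → ZMod 2 :=
  (F.map Fault.syn).sum

/-- Hamming weight of a binary vector. -/
noncomputable def wt {n : ℕ} (f : ZMod n → ZMod 2) : ℕ := {i | f i ≠ 0}.ncard

/-- The set of triggered syndrome bits, `supp s(F)`. -/
def suppSyn (F : Multiset (Fault m)) : Set (ZMod m) := {j | synd F j = 1}

/-- Boundary of a set of cat qubits: checks `j` with exactly one of `j`, `j+1` in `E`. -/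
def boundary (E : Set (ZMod m)) : Set (ZMod m) := {j | Xor' (j ∈ E) (j + 1 ∈ E)}

/-- Indicator (as a binary data vector) of the set `{2r+1 : r ∈ E}`. -/
noncomputable def indicOdd (E : Set (ZMod m)) : ZMod (2 * m) → ZMod 2 :=
  fun q => if ∃ r ∈ E, q = d0 r + 1 then 1 else 0

/-- Indicator of a single data position `j`. -/
def indic {n : ℕ} (j : ZMod n) : ZMod n → ZMod 2 := fun q => if q = j then 1 else 0

/-- `c` is the correction output by the minimum-weight decoder with parameter `t`
    on syndrome `s(F)`: if there is a set `E` of at most `t` cat qubits whose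
    boundary equals `supp s(F)`, then `c` is the indicator of `{2r+1 : r ∈ E}`;
    otherwise `c = 0`. -/
def IsDecoderCorrection (t : ℕ) (F : Multiset (Fault m)) (c : ZMod (2 * m) → ZMod 2) : Prop :=
  (∃ E : Set (ZMod m), E.ncard ≤ t ∧ boundary E = suppSyn F ∧ c = indicOdd E) ∨
  ((¬ ∃ E : Set (ZMod m), E.ncard ≤ t ∧ boundary E = suppSyn F) ∧ c = 0)

/-- `true` iff the fault is a measurement fault. -/
def Fault.isMeas : Fault m → Bool
  | .meas _ => true
  | _ => false

end CutCat

namespace CutCatAux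
open CutCat

variable {m : ℕ}

lemma one_ne_zero' (hm : 3 ≤ m) : (1 : ZMod m) ≠ 0 := by
  intro h
  rw [show ((1 : ZMod m)) = ((1 : ℕ) : ZMod m) by simp,
    ZMod.natCast_eq_zero_iff] at h
  exact absurd (Nat.le_of_dvd one_pos h) (by omega)

lemma two_ne_zero' (hm : 3 ≤ m) : (2 : ZMod m) ≠ 0 := by
  intro h
  rw [show ((2 : ZMod m)) = ((2 : ℕ) : ZMod m) by simp,
    ZMod.natCast_eq_zero_iff] at h
  exact absurd (Nat.le_of_dvd two_pos h) (by omega)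

lemma sub_one_ne (hm : 3 ≤ m) (r : ZMod m) : r - 1 ≠ r := by
  intro h
  exact one_ne_zero' hm (sub_eq_self.mp h)

lemma wt_zero {n : ℕ} : wt (0 : ZMod n → ZMod 2) = 0 := by
  simp [wt]

lemma wt_indic {n : ℕ} (j : ZMod n) : wt (indic j) = 1 := by
  have : {i | indic j i ≠ 0} = {j} := by
    ext i
    by_cases h : i = j <;> simp [indic, h]
  rw [wt, this, Set.ncard_singleton]

lemma boundary_empty : boundary (∅ : Set (ZMod m)) = ∅ := by
  ext j; simp [boundary, Xor']

lemma boundary_singleton (hm : 3 ≤ m) (s : ZMod m) :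
    boundary ({s} : Set (ZMod m)) = {s - 1, s} := by
  ext j
  simp only [boundary, Set.mem_singleton_iff, Set.mem_setOf_eq, Set.mem_insert_iff, Xor']
  constructor
  · rintro (⟨h1, _⟩ | ⟨h1, _⟩)
    · right; exact h1
    · left; exact eq_sub_of_add_eq h1
  · rintro (h | h)
    · right
      refine ⟨by rw [h]; ring, ?_⟩
      rw [h]; exact sub_one_ne hm s
    · left
      refine ⟨h, ?_⟩
      rw [h]; intro hh
      exact one_ne_zero' hm (by linear_combination hh)

lemma supp_pair (a b : ZMod m) (hab : a ≠ b) :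
    {j | ((if j = a then (1 : ZMod 2) else 0) + (if j = b then 1 else 0)) = 1}
      = ({a, b} : Set (ZMod m)) := by
  ext j
  by_cases h1 : j = a <;> by_cases h2 : j = b
  · exact absurd (h1 ▸ h2) hab
  · simp only [h1, h2, if_true, if_false, add_zero, Set.mem_insert_iff, Set.mem_setOf_eq]
    simp [hab]
  · simp only [h1, h2, if_true, if_false, zero_add, Set.mem_insert_iff, Set.mem_setOf_eq]
    simp [Ne.symm hab]
  · simp [h1, h2]

lemma supp_single (a : ZMod m) :
    {j | (if j = a then (1 : ZMod 2) else 0) = 1} = ({a} : Set (ZMod m)) := by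
  ext j
  by_cases h1 : j = a <;> simp [h1]

lemma synd_singleton (f : Fault m) : synd ({f} : Multiset (Fault m)) = f.syn := by
  simp [synd]

lemma dataErr_singleton (f : Fault m) :
    dataErr ({f} : Multiset (Fault m)) = f.dataErr := by
  simp [dataErr]

lemma indicOdd_singleton (r : ZMod m) : indicOdd ({r} : Set (ZMod m)) = indic (d0 r + 1) := by
  funext q
  simp [indicOdd, indic]

lemma ncard_le_one (hm : 3 ≤ m) {E : Set (ZMod m)} (hE : E.ncard ≤ 1) :
    E = ∅ ∨ ∃ s, E = {s} := by
  haveI : NeZero m := ⟨by omega⟩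
  exact (Set.ncard_le_one_iff_eq (Set.toFinite E)).mp hE

/-- The key uniqueness fact: if `boundary E = {r-1, r}` and `E.ncard ≤ 1`, then `E = {r}`. -/
lemma unique_E (hm : 3 ≤ m) {E : Set (ZMod m)} (r : ZMod m)
    (h1 : E.ncard ≤ 1) (h2 : boundary E = ({r - 1, r} : Set (ZMod m))) :
    E = {r} := by
  rcases ncard_le_one hm h1 with rfl | ⟨s, rfl⟩
  · rw [boundary_empty] at h2
    exact absurd (h2 ▸ (by simp : r ∈ ({r - 1, r} : Set (ZMod m)))) (by simp)
  · rw [boundary_singleton hm] at h2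
    have hs : s ∈ ({r - 1, r} : Set (ZMod m)) := by rw [← h2]; simp
    simp only [Set.mem_insert_iff, Set.mem_singleton_iff] at hs
    rcases hs with hs | hs
    · exfalso
      have hs1 : s - 1 ∈ ({r - 1, r} : Set (ZMod m)) := by rw [← h2]; simp
      simp only [Set.mem_insert_iff, Set.mem_singleton_iff] at hs1
      rw [hs] at hs1
      rcases hs1 with hs1 | hs1
      · exact one_ne_zero' hm (by linear_combination -hs1)
      · exact two_ne_zero' hm (by linear_combination -hs1)
    · rw [hs]

end CutCatAux

open CutCatAux in
/-- Theorem 1 (combinatorial core, distance three): for `m ≥ 3`, any fault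
pattern of weight at most `1`, after the minimum-weight decoder's correction
with parameter `t = 1`, leaves a residual data error of weight at most the
number of faults. -/
theorem cutcat_distance_three (m : ℕ) (hm : 3 ≤ m)
    (F : Multiset (CutCat.Fault m)) (hF : Multiset.card F ≤ 1)
    (c : ZMod (2 * m) → ZMod 2) (hc : CutCat.IsDecoderCorrection 1 F c) :
    CutCat.wt (CutCat.dataErr F + c) ≤ Multiset.card F := by
  classical
  haveI : NeZero m := ⟨by omega⟩
  have haddself : ∀ x : ZMod 2, x + x = 0 := by decide
  by_cases h0 : F = 0
  · subst h0
    have hsupp : CutCat.suppSyn (0 : Multiset (CutCat.Fault m)) = ∅ := by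
      ext j; simp [CutCat.suppSyn, CutCat.synd]
    have hdz : CutCat.dataErr (0 : Multiset (CutCat.Fault m)) = 0 := by
      simp [CutCat.dataErr]
    rcases hc with ⟨E, hE1, hE2, rfl⟩ | ⟨_, rfl⟩
    · rw [hsupp] at hE2
      have hEempty : E = ∅ := by
        rcases ncard_le_one hm hE1 with rfl | ⟨s, rfl⟩
        · rfl
        · rw [boundary_singleton hm] at hE2
          rw [Set.eq_empty_iff_forall_notMem] at hE2
          exact absurd (hE2 s (by simp)) (by simp)
      subst hEempty
      have : CutCat.indicOdd (∅ : Set (ZMod m)) = 0 := by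
        funext q; simp [CutCat.indicOdd]
      rw [hdz, this, add_zero, wt_zero]
      exact Nat.zero_le _
    · rw [hdz, add_zero, wt_zero]
      exact Nat.zero_le _
  · obtain ⟨f, rfl⟩ : ∃ f, F = {f} := by
      have h1 : Multiset.card F = 1 :=
        le_antisymm hF (Multiset.card_pos.mpr h0)
      exact Multiset.card_eq_one.mp h1
    rw [Multiset.card_singleton]
    cases f with
    | meas r =>
      have hsupp : CutCat.suppSyn ({CutCat.Fault.meas r} : Multiset (CutCat.Fault m))
          = {r} := by
        rw [CutCat.suppSyn, synd_singleton, CutCat.Fault.syn]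
        exact supp_single r
      rcases hc with ⟨E, hE1, hE2, rfl⟩ | ⟨_, rfl⟩
      · exfalso
        rw [hsupp] at hE2
        rcases ncard_le_one hm hE1 with rfl | ⟨s, rfl⟩
        · rw [boundary_empty] at hE2
          exact Set.singleton_ne_empty r hE2.symm
        · rw [boundary_singleton hm] at hE2
          have h1 : s - 1 ∈ ({r} : Set (ZMod m)) := by rw [← hE2]; simp
          have h2 : s ∈ ({r} : Set (ZMod m)) := by rw [← hE2]; simp
          simp only [Set.mem_singleton_iff] at h1 h2
          exact sub_one_ne hm s (h1.trans h2.symm)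
      · rw [dataErr_singleton]
        show CutCat.wt ((CutCat.Fault.meas r).dataErr + 0) ≤ 1
        rw [CutCat.Fault.dataErr, add_zero, wt_zero]
        omega
    | post r =>
      have hsupp : CutCat.suppSyn ({CutCat.Fault.post r} : Multiset (CutCat.Fault m))
          = {r - 1, r} := by
        rw [CutCat.suppSyn, synd_singleton, CutCat.Fault.syn]
        exact supp_pair _ _ (sub_one_ne hm r)
      rcases hc with ⟨E, hE1, hE2, rfl⟩ | ⟨_, rfl⟩
      · rw [hsupp] at hE2
        have hE : E = {r} := unique_E hm r hE1 hE2
        subst hE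
        rw [dataErr_singleton, indicOdd_singleton]
        show CutCat.wt ((CutCat.Fault.post r).dataErr + CutCat.indic (CutCat.d0 r + 1)) ≤ 1
        rw [CutCat.Fault.dataErr, zero_add, wt_indic]
      · rw [dataErr_singleton]
        show CutCat.wt ((CutCat.Fault.post r).dataErr + 0) ≤ 1
        rw [CutCat.Fault.dataErr, add_zero, wt_zero]
        omega
    | mid r =>
      have hsupp : CutCat.suppSyn ({CutCat.Fault.mid r} : Multiset (CutCat.Fault m))
          = {r - 1, r} := by
        rw [CutCat.suppSyn, synd_singleton, CutCat.Fault.syn]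
        exact supp_pair _ _ (sub_one_ne hm r)
      rcases hc with ⟨E, hE1, hE2, rfl⟩ | ⟨_, rfl⟩
      · rw [hsupp] at hE2
        have hE : E = {r} := unique_E hm r hE1 hE2
        subst hE
        rw [dataErr_singleton, indicOdd_singleton]
        have : (CutCat.Fault.mid r).dataErr + CutCat.indic (CutCat.d0 r + 1) = 0 := by
          funext q
          show (CutCat.Fault.mid r).dataErr q + CutCat.indic (CutCat.d0 r + 1) q = 0
          rw [CutCat.Fault.dataErr, CutCat.indic]
          exact haddself _
        rw [this, wt_zero]
        omega
      · rw [dataErr_singleton]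
        have : (CutCat.Fault.mid r).dataErr + 0 = CutCat.indic (CutCat.d0 r + 1) := by
          funext q
          show (CutCat.Fault.mid r).dataErr q + 0 = CutCat.indic (CutCat.d0 r + 1) q
          rw [CutCat.Fault.dataErr, CutCat.indic, add_zero]
        rw [this, wt_indic]
    | pre r =>
      have hsupp : CutCat.suppSyn ({CutCat.Fault.pre r} : Multiset (CutCat.Fault m))
          = {r - 1, r} := by
        rw [CutCat.suppSyn, synd_singleton, CutCat.Fault.syn]
        exact supp_pair _ _ (sub_one_ne hm r)
      rcases hc with ⟨E, hE1, hE2, rfl⟩ | ⟨hne, rfl⟩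
      · rw [hsupp] at hE2
        have hE : E = {r} := unique_E hm r hE1 hE2
        subst hE
        rw [dataErr_singleton, indicOdd_singleton]
        have : (CutCat.Fault.pre r).dataErr + CutCat.indic (CutCat.d0 r + 1)
            = CutCat.indic (CutCat.d0 r) := by
          funext q
          show (CutCat.Fault.pre r).dataErr q + CutCat.indic (CutCat.d0 r + 1) q
            = CutCat.indic (CutCat.d0 r) q
          rw [CutCat.Fault.dataErr, CutCat.indic, CutCat.indic, add_assoc, haddself, add_zero]
        rw [this, wt_indic]
      · exfalso
        apply hne
        refine ⟨{r}, by simp, ?_⟩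
        rw [boundary_singleton hm, hsupp]
end

section
/- Combinatorial core of Theorem 2 (distance-five fault tolerance of the cut-cat gadget): let m ≥ 5 and use the minimum-weight decoder with parameter t = 2. For every fault pattern F with w(F) ≤ 2, the residual data error e(F) + c (coordinatewise mod-2 sum of the data error and the decoder's correction) has Hamming weight at most w(F); thus no fault of weight w ≤ 2 propagates to a data error of weight greater than w after correction. -/
open scoped Classical

namespace CutCat

variable {m : ℕ}

lemma z2_add_self (x : ZMod 2) : x + x = 0 := by revert x; decide

lemma z2_cases (x : ZMod 2) : x = 0 ∨ x = 1 := by revert x; decide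

lemma d0_val (hm : 0 < m) (r : ZMod m) : (d0 r).val = 2 * r.val := by
  haveI : NeZero m := ⟨by omega⟩
  haveI : NeZero (2 * m) := ⟨by omega⟩
  have h1 : (d0 r) = ((2 * r.val : ℕ) : ZMod (2 * m)) := by
    simp only [d0]; push_cast; ring
  rw [h1, ZMod.val_cast_of_lt]
  have := ZMod.val_lt r; omega

lemma d1_val (hm : 0 < m) (r : ZMod m) : (d0 r + 1).val = 2 * r.val + 1 := by
  haveI : NeZero m := ⟨by omega⟩
  haveI : NeZero (2 * m) := ⟨by omega⟩
  have h1 : (d0 r + 1) = ((2 * r.val + 1 : ℕ) : ZMod (2 * m)) := by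
    simp only [d0]; push_cast; ring
  rw [h1, ZMod.val_cast_of_lt]
  have := ZMod.val_lt r; omega

lemma d0_inj (hm : 0 < m) {r s : ZMod m} (h : d0 r = d0 s) : r = s := by
  haveI : NeZero m := ⟨by omega⟩
  have h2 := congrArg ZMod.val h
  rw [d0_val hm, d0_val hm] at h2
  exact ZMod.val_injective m (by omega)

lemma d1_inj (hm : 0 < m) {r s : ZMod m} (h : d0 r + 1 = d0 s + 1) : r = s := by
  haveI : NeZero m := ⟨by omega⟩
  have h2 := congrArg ZMod.val h
  rw [d1_val hm, d1_val hm] at h2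
  exact ZMod.val_injective m (by omega)

/-- weight lemmas -/
lemma wt_zero {n : ℕ} : wt (0 : ZMod n → ZMod 2) = 0 := by
  simp [wt]

lemma supp_indic {n : ℕ} (j : ZMod n) : {i | indic j i ≠ 0} = {j} := by
  ext i; by_cases h : i = j <;> simp [indic, h]

lemma wt_indic {n : ℕ} (j : ZMod n) : wt (indic j) = 1 := by
  rw [wt, supp_indic, Set.ncard_singleton]

lemma wt_add_le {n : ℕ} [NeZero n] (f g : ZMod n → ZMod 2) :
    wt (f + g) ≤ wt f + wt g := by
  have hsub : {i | (f + g) i ≠ 0} ⊆ {i | f i ≠ 0} ∪ {i | g i ≠ 0} := by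
    intro i hi
    have hi' : f i + g i ≠ 0 := hi
    simp only [Set.mem_setOf_eq, Set.mem_union]
    by_contra hcon
    push_neg at hcon
    obtain ⟨h1, h2⟩ := hcon
    rw [h1, h2, add_zero] at hi'
    exact hi' rfl
  calc wt (f + g) ≤ ({i | f i ≠ 0} ∪ {i | g i ≠ 0}).ncard :=
        Set.ncard_le_ncard hsub (Set.toFinite _)
    _ ≤ wt f + wt g := Set.ncard_union_le _ _

lemma wt_indicOdd_le (hm : 0 < m) (E : Set (ZMod m)) :
    wt (indicOdd E) ≤ E.ncard := by
  haveI : NeZero m := ⟨by omega⟩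
  haveI : NeZero (2 * m) := ⟨by omega⟩
  have hsub : {q | indicOdd E q ≠ 0} ⊆ (fun r => d0 r + 1) '' E := by
    intro q hq
    simp only [Set.mem_setOf_eq, indicOdd, ne_eq, ite_eq_right_iff, not_forall] at hq
    obtain ⟨⟨r, hr, rfl⟩, -⟩ := hq
    exact ⟨r, hr, rfl⟩
  calc wt (indicOdd E) ≤ ((fun r => d0 r + 1) '' E).ncard :=
        Set.ncard_le_ncard hsub (Set.toFinite _)
    _ ≤ E.ncard := Set.ncard_image_le (Set.toFinite _)

/-- boundary indicator machinery -/
def bndInd (χ : ZMod m → ZMod 2) : ZMod m → ZMod 2 := fun j => χ j + χ (j + 1)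

lemma bndInd_add (χ ψ : ZMod m → ZMod 2) :
    bndInd (χ + ψ) = bndInd χ + bndInd ψ := by
  funext j; simp only [bndInd, Pi.add_apply]; ring

lemma supp_bndInd (χ : ZMod m → ZMod 2) :
    {j | bndInd χ j = 1} = boundary {x | χ x = 1} := by
  ext j
  simp only [Set.mem_setOf_eq, boundary, bndInd]
  rcases z2_cases (χ j) with h | h <;> rcases z2_cases (χ (j + 1)) with h' | h' <;>
    rw [h, h'] <;> simp only [Xor', Xor] <;> decide

lemma suppSyn_eq (F : Multiset (Fault m)) (χ : ZMod m → ZMod 2)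
    (h : synd F = bndInd χ) : suppSyn F = boundary {x | χ x = 1} := by
  show {j | synd F j = 1} = _
  rw [h]
  exact supp_bndInd χ

lemma sum_boundary_indicator [NeZero m] (E : Set (ZMod m)) :
    ∑ j : ZMod m, (if j ∈ boundary E then (1 : ZMod 2) else 0) = 0 := by
  have h : ∀ j : ZMod m, (if j ∈ boundary E then (1 : ZMod 2) else 0)
      = (if j ∈ E then (1 : ZMod 2) else 0) + (if j + 1 ∈ E then 1 else 0) := by
    intro j
    by_cases h1 : j ∈ E <;> by_cases h2 : j + 1 ∈ E <;>
      simp [boundary, Set.mem_setOf_eq, Xor', h1, h2] <;> decide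
  rw [Finset.sum_congr rfl (fun j _ => h j), Finset.sum_add_distrib]
  have h2 : ∑ j : ZMod m, (if j + 1 ∈ E then (1 : ZMod 2) else 0)
      = ∑ j : ZMod m, (if j ∈ E then (1 : ZMod 2) else 0) :=
    Fintype.sum_equiv (Equiv.addRight 1) _ _ (fun x => rfl)
  rw [h2]
  exact z2_add_self _

lemma sum_synd_eq_zero [NeZero m] (F : Multiset (Fault m)) (E : Set (ZMod m))
    (hE : boundary E = suppSyn F) : ∑ j : ZMod m, synd F j = 0 := by
  have h1 : ∀ j : ZMod m, synd F j = (if j ∈ boundary E then (1 : ZMod 2) else 0) := by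
    intro j
    rw [hE]
    rcases z2_cases (synd F j) with h | h <;>
      simp [suppSyn, Set.mem_setOf_eq, h] <;> decide
  rw [Finset.sum_congr rfl (fun j _ => h1 j)]
  exact sum_boundary_indicator E

/-- uniqueness of small decoding set -/
lemma boundary_inj (hm : 5 ≤ m) {E E' : Set (ZMod m)}
    (hE : E.ncard ≤ 2) (hE' : E'.ncard ≤ 2)
    (h : boundary E = boundary E') : E = E' := by
  haveI : NeZero m := ⟨by omega⟩
  have key : ∀ j : ZMod m, ((j ∈ E) ↔ (j ∈ E')) ↔ ((j + 1 ∈ E) ↔ (j + 1 ∈ E')) := by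
    intro j
    have h2 := Set.ext_iff.mp h j
    simp only [boundary, Set.mem_setOf_eq, Xor', Xor] at h2
    tauto
  have prop : ∀ (n : ℕ) (j : ZMod m),
      ((j ∈ E) ↔ (j ∈ E')) ↔ ((j + n ∈ E) ↔ (j + n ∈ E')) := by
    intro n
    induction n with
    | zero => intro j; simp
    | succ k ih =>
      intro j
      have h1 := ih j
      have h2 := key (j + (k : ZMod m))
      have h3 : (j + ((k + 1 : ℕ) : ZMod m)) = (j + (k : ZMod m)) + 1 := by
        push_cast; ring
      rw [h3]
      tauto
  by_cases h0 : ((0 : ZMod m) ∈ E) ↔ ((0 : ZMod m) ∈ E')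
  · ext j
    have hj := (prop j.val 0).mp h0
    rwa [zero_add, ZMod.natCast_val, ZMod.cast_id] at hj
  · exfalso
    have hall : ∀ j : ZMod m, ¬ ((j ∈ E) ↔ (j ∈ E')) := by
      intro j hj
      apply h0
      apply (prop j.val 0).mpr
      rwa [zero_add, ZMod.natCast_val, ZMod.cast_id]
    have hcomp : E' = Eᶜ := by
      ext j
      have hj := hall j
      simp only [Set.mem_compl_iff]
      tauto
    have hcard : E.ncard + E'.ncard = m := by
      rw [hcomp, Set.ncard_add_ncard_compl, Nat.card_zmod]
    omega

/-- decoder extraction lemmas -/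
lemma decoder_eq (hm : 5 ≤ m) {F : Multiset (Fault m)} {c : ZMod (2 * m) → ZMod 2}
    (hc : IsDecoderCorrection 2 F c) (E₀ : Set (ZMod m)) (hE₀ : E₀.ncard ≤ 2)
    (hs : boundary E₀ = suppSyn F) : c = indicOdd E₀ := by
  rcases hc with ⟨E, hE, hbd, rfl⟩ | ⟨hne, rfl⟩
  · rw [boundary_inj hm hE hE₀ (hbd.trans hs.symm)]
  · exact absurd ⟨E₀, hE₀, hs⟩ hne

lemma decoder_zero (hm : 5 ≤ m) {F : Multiset (Fault m)} {c : ZMod (2 * m) → ZMod 2}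
    (hc : IsDecoderCorrection 2 F c)
    (hodd : (haveI : NeZero m := ⟨by omega⟩; ∑ j : ZMod m, synd F j) = 1) : c = 0 := by
  haveI : NeZero m := ⟨by omega⟩
  rcases hc with ⟨E, hE, hbd, rfl⟩ | ⟨_, rfl⟩
  · exfalso
    have h0 := sum_synd_eq_zero F E hbd
    rw [hodd] at h0
    exact one_ne_zero h0
  · rfl

end CutCat
namespace CutCat

variable {m : ℕ}

/-- the location of a fault -/
def loc : Fault m → ZMod m
  | .pre r => r
  | .mid r => r
  | .post r => r
  | .meas r => r

/-- the correction bit the decoder should apply for this fault -/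
noncomputable def corr : Fault m → ZMod (2 * m) → ZMod 2
  | .pre r => indic (d0 r + 1)
  | .mid r => indic (d0 r + 1)
  | .post r => indic (d0 r + 1)
  | .meas _ => 0

/-- the residual error left by this fault after its correction -/
noncomputable def res : Fault m → ZMod (2 * m) → ZMod 2
  | .pre r => indic (d0 r)
  | .mid _ => 0
  | .post r => indic (d0 r + 1)
  | .meas _ => 0

lemma synPair_eq (r : ZMod m) :
    (fun j => (if j = r - 1 then (1 : ZMod 2) else 0) + if j = r then 1 else 0)
      = bndInd (indic r) := by
  funext j
  simp only [bndInd, indic, eq_sub_iff_add_eq]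
  ring

lemma syn_eq_bndInd (f : Fault m) (hf : f.isMeas = false) :
    f.syn = bndInd (indic (loc f)) := by
  cases f with
  | pre r => exact synPair_eq r
  | mid r => exact synPair_eq r
  | post r => exact synPair_eq r
  | meas r => simp [Fault.isMeas] at hf

lemma corr_eq (f : Fault m) (hf : f.isMeas = false) :
    corr f = indic (d0 (loc f) + 1) := by
  cases f with
  | pre r => rfl
  | mid r => rfl
  | post r => rfl
  | meas r => simp [Fault.isMeas] at hf

lemma dataErr_of_meas (f : Fault m) (hf : f.isMeas = true) : f.dataErr = 0 := by
  cases f with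
  | meas r => rfl
  | pre r => simp [Fault.isMeas] at hf
  | mid r => simp [Fault.isMeas] at hf
  | post r => simp [Fault.isMeas] at hf

lemma dataErr_add_corr (f : Fault m) : f.dataErr + corr f = res f := by
  cases f with
  | pre r =>
    funext q
    show ((if q = d0 r then (1 : ZMod 2) else 0) + (if q = d0 r + 1 then 1 else 0))
        + (if q = d0 r + 1 then 1 else 0) = (if q = d0 r then 1 else 0)
    rw [add_assoc, z2_add_self, add_zero]
  | mid r =>
    funext q
    show (if q = d0 r + 1 then (1 : ZMod 2) else 0) + (if q = d0 r + 1 then 1 else 0) = 0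
    rw [z2_add_self]
  | post r =>
    funext q
    show (0 : ZMod 2) + (if q = d0 r + 1 then 1 else 0) = (if q = d0 r + 1 then 1 else 0)
    rw [zero_add]
  | meas r => funext q; show (0 : ZMod 2) + 0 = 0; rw [add_zero]

lemma wt_res_le (f : Fault m) : wt (res f) ≤ 1 := by
  cases f with
  | pre r => rw [res, wt_indic]
  | mid r => rw [res, wt_zero]; omega
  | post r => rw [res, wt_indic]
  | meas r => rw [res, wt_zero]; omega

lemma wt_dataErr_le (hm : 0 < m) (f : Fault m) : wt f.dataErr ≤ 2 := by
  haveI : NeZero (2 * m) := ⟨by omega⟩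
  cases f with
  | pre r =>
    have h : Fault.dataErr (.pre r) = indic (d0 r) + indic (d0 r + 1) := rfl
    rw [h]
    calc wt (indic (d0 r) + indic (d0 r + 1)) ≤ wt (indic (d0 r)) + wt (indic (d0 r + 1)) :=
          wt_add_le _ _
      _ ≤ 2 := by rw [wt_indic, wt_indic]
  | mid r =>
    have h : Fault.dataErr (.mid r) = indic (d0 r + 1) := rfl
    rw [h, wt_indic]; omega
  | post r => rw [Fault.dataErr, wt_zero]; omega
  | meas r => rw [Fault.dataErr, wt_zero]; omega

lemma sum_syn [NeZero m] (f : Fault m) :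
    ∑ j : ZMod m, f.syn j = if f.isMeas then 1 else 0 := by
  have hpair : ∀ r : ZMod m,
      ∑ j : ZMod m, ((if j = r - 1 then (1 : ZMod 2) else 0) + if j = r then 1 else 0) = 0 := by
    intro r
    rw [Finset.sum_add_distrib, Finset.sum_ite_eq' Finset.univ (r - 1) (fun _ => (1 : ZMod 2)),
      Finset.sum_ite_eq' Finset.univ r (fun _ => (1 : ZMod 2))]
    simp only [Finset.mem_univ, if_true]
    decide
  cases f with
  | pre r => exact hpair r
  | mid r => exact hpair r
  | post r => exact hpair r
  | meas r =>
    show ∑ j : ZMod m, (if j = r then (1 : ZMod 2) else 0) = 1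
    rw [Finset.sum_ite_eq' Finset.univ r (fun _ => (1 : ZMod 2))]
    simp

/-- indicOdd computations -/
lemma indicOdd_empty : indicOdd (∅ : Set (ZMod m)) = 0 := by
  funext q; simp [indicOdd]

lemma indicOdd_singleton (r : ZMod m) : indicOdd {r} = indic (d0 r + 1) := by
  funext q; simp [indicOdd, indic]

lemma indicOdd_pair (hm : 0 < m) {r s : ZMod m} (h : r ≠ s) :
    indicOdd {r, s} = indic (d0 r + 1) + indic (d0 s + 1) := by
  funext q
  have hd : d0 r ≠ d0 s := fun he => h (d0_inj hm he)
  by_cases h1 : q = d0 r + 1 <;> by_cases h2 : q = d0 s + 1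
  · exact absurd (d1_inj hm (h1.symm.trans h2)) h
  · simp [indicOdd, indic, h1, h2, hd]
  · simp [indicOdd, indic, h1, h2, hd.symm]
  · simp [indicOdd, indic, h1, h2]

lemma supp_indic_one (r : ZMod m) : {x : ZMod m | indic r x = 1} = {r} := by
  ext x; by_cases h : x = r <;> simp [indic, h]

lemma supp_indic_pair {r s : ZMod m} (h : r ≠ s) :
    {x : ZMod m | (indic r + indic s) x = 1} = {r, s} := by
  ext x
  by_cases h1 : x = r <;> by_cases h2 : x = s
  · exact absurd (h1.symm.trans h2) h
  · simp [indic, h1, h2, h]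
  · simp [indic, h1, h2, h.symm]
  · simp [indic, h1, h2]

/-- multiset computations -/
lemma dataErr_singleton (f : Fault m) : dataErr ({f} : Multiset (Fault m)) = f.dataErr := by
  simp [dataErr]

lemma synd_singleton (f : Fault m) : synd ({f} : Multiset (Fault m)) = f.syn := by
  simp [synd]

lemma dataErr_pair (f g : Fault m) :
    dataErr ({f, g} : Multiset (Fault m)) = f.dataErr + g.dataErr := by
  simp [dataErr, Multiset.insert_eq_cons]

lemma synd_pair (f g : Fault m) :
    synd ({f, g} : Multiset (Fault m)) = f.syn + g.syn := by
  simp [synd, Multiset.insert_eq_cons]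

end CutCat

/-- Theorem 2 (combinatorial core, distance five): for `m ≥ 5`, any fault
pattern of weight at most `2`, after the minimum-weight decoder's correction
with parameter `t = 2`, leaves a residual data error of weight at most the
number of faults. -/
theorem cutcat_distance_five (m : ℕ) (hm : 5 ≤ m)
    (F : Multiset (CutCat.Fault m)) (hF : Multiset.card F ≤ 2)
    (c : ZMod (2 * m) → ZMod 2) (hc : CutCat.IsDecoderCorrection 2 F c) :
    CutCat.wt (CutCat.dataErr F + c) ≤ Multiset.card F := by
  open CutCat in
  have hm0 : 0 < m := by omega
  haveI : NeZero m := ⟨by omega⟩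
  haveI : NeZero (2 * m) := ⟨by omega⟩
  have hcase : Multiset.card F = 0 ∨ Multiset.card F = 1 ∨ Multiset.card F = 2 := by omega
  rcases hcase with h | h | h
  · -- no faults
    obtain rfl : F = 0 := Multiset.card_eq_zero.mp h
    have hd : dataErr (0 : Multiset (Fault m)) = 0 := by simp [dataErr]
    have hsupp : suppSyn (0 : Multiset (Fault m)) = boundary (∅ : Set (ZMod m)) := by
      ext j
      simp [suppSyn, synd, boundary, Xor']
    have hc0 : c = indicOdd (∅ : Set (ZMod m)) :=
      decoder_eq hm hc ∅ (by simp) hsupp.symm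
    rw [hc0, indicOdd_empty, hd, add_zero, wt_zero, h]
  · -- one fault
    obtain ⟨f, rfl⟩ := Multiset.card_eq_one.mp h
    rw [h]
    cases hf : f.isMeas
    · -- not a measurement fault
      have hsyn : synd ({f} : Multiset (Fault m)) = bndInd (indic (loc f)) := by
        rw [synd_singleton, syn_eq_bndInd f hf]
      have hsupp := suppSyn_eq _ _ hsyn
      rw [supp_indic_one] at hsupp
      have hc1 : c = indicOdd {loc f} := decoder_eq hm hc _ (by simp) hsupp.symm
      have hres : dataErr ({f} : Multiset (Fault m)) + c = res f := by
        rw [dataErr_singleton, hc1, indicOdd_singleton, ← corr_eq f hf, dataErr_add_corr]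
      rw [hres]
      exact wt_res_le f
    · -- measurement fault
      have hsum : ∑ j : ZMod m, synd ({f} : Multiset (Fault m)) j = 1 := by
        rw [synd_singleton]
        rw [sum_syn f, hf]
        rfl
      have hc0 : c = 0 := decoder_zero hm hc hsum
      rw [hc0, add_zero, dataErr_singleton, dataErr_of_meas f hf, wt_zero]
      omega
  · -- two faults
    obtain ⟨f, g, rfl⟩ := Multiset.card_eq_two.mp h
    rw [h]
    cases hf : f.isMeas <;> cases hg : g.isMeas
    · -- both non-measurement faults
      have hsyn : synd ({f, g} : Multiset (Fault m))
          = bndInd (indic (loc f) + indic (loc g)) := by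
        rw [synd_pair, syn_eq_bndInd f hf, syn_eq_bndInd g hg, bndInd_add]
      have hcfg : c = corr f + corr g := by
        by_cases hrs : loc f = loc g
        · have hχ : indic (loc f) + indic (loc g) = (0 : ZMod m → ZMod 2) := by
            rw [hrs]; funext x; exact z2_add_self _
          have hsupp := suppSyn_eq _ _ (by rw [hsyn, hχ] :
            synd ({f, g} : Multiset (Fault m)) = bndInd (0 : ZMod m → ZMod 2))
          have h0 : {x : ZMod m | (0 : ZMod m → ZMod 2) x = 1} = ∅ := by
            ext x; simp
          rw [h0] at hsupp
          have hc0 : c = indicOdd (∅ : Set (ZMod m)) :=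
            decoder_eq hm hc ∅ (by simp) hsupp.symm
          rw [hc0, indicOdd_empty, corr_eq f hf, corr_eq g hg, hrs]
          funext q
          exact (z2_add_self _).symm
        · have hsupp := suppSyn_eq _ _ hsyn
          rw [supp_indic_pair hrs] at hsupp
          have hcard : ({loc f, loc g} : Set (ZMod m)).ncard ≤ 2 :=
            le_trans (Set.ncard_insert_le _ _) (by simp)
          have hc1 : c = indicOdd {loc f, loc g} := decoder_eq hm hc _ hcard hsupp.symm
          rw [hc1, indicOdd_pair hm0 hrs, corr_eq f hf, corr_eq g hg]
      have hres : dataErr ({f, g} : Multiset (Fault m)) + c = res f + res g := by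
        rw [dataErr_pair, hcfg, add_add_add_comm, dataErr_add_corr, dataErr_add_corr]
      rw [hres]
      calc wt (res f + res g) ≤ wt (res f) + wt (res g) := wt_add_le _ _
        _ ≤ 2 := by have := wt_res_le f; have := wt_res_le g; omega
    · -- f non-meas, g meas
      have hsum : ∑ j : ZMod m, synd ({f, g} : Multiset (Fault m)) j = 1 := by
        rw [synd_pair]
        simp only [Pi.add_apply]
        rw [Finset.sum_add_distrib, sum_syn f, sum_syn g, hf, hg]
        rfl
      have hc0 : c = 0 := decoder_zero hm hc hsum
      rw [hc0, add_zero, dataErr_pair, dataErr_of_meas g hg, add_zero]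
      exact wt_dataErr_le hm0 f
    · -- f meas, g non-meas
      have hsum : ∑ j : ZMod m, synd ({f, g} : Multiset (Fault m)) j = 1 := by
        rw [synd_pair]
        simp only [Pi.add_apply]
        rw [Finset.sum_add_distrib, sum_syn f, sum_syn g, hf, hg]
        rfl
      have hc0 : c = 0 := decoder_zero hm hc hsum
      rw [hc0, add_zero, dataErr_pair, dataErr_of_meas f hf, zero_add]
      exact wt_dataErr_le hm0 g
    · -- both meas
      have hd : dataErr ({f, g} : Multiset (Fault m)) = 0 := by
        rw [dataErr_pair, dataErr_of_meas f hf, dataErr_of_meas g hg, add_zero]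
      rw [hd, zero_add]
      rcases hc with ⟨E, hE, -, rfl⟩ | ⟨-, rfl⟩
      · exact le_trans (wt_indicOdd_le hm0 E) hE
      · rw [wt_zero]; omega
end

section
/- Explicit arc construction realizing an even triggered set (the set 𝓘 of the decoding algorithms): let m ≥ 1 and let A ⊆ {0, 1, ..., m−1} have even cardinality 2k, with increasing enumeration a_0 < a_1 < ... < a_{2k−1}. Let E ⊆ ZMod m be the union of the integer intervals {a_{2j}+1, a_{2j}+2, ..., a_{2j+1}} for j = 0, ..., k−1 (taken as residues mod m), and let e be the indicator function of E. Then supp ∂e = A; that is, every even-size subset of the ring of checks is the triggered set of the indicator of such a union of arcs. -/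
open scoped Classical

namespace RingCheck

/-- Cyclic boundary map of the length-`m` ring of parity checks:
`(∂e)(j) = e j + e (j+1)`. -/
def bdy {m : ℕ} (e : ZMod m → ZMod 2) : ZMod m → ZMod 2 := fun j => e j + e (j + 1)

/-- Hamming weight of a binary vector. -/
noncomputable def wt {m : ℕ} (f : ZMod m → ZMod 2) : ℕ := {i | f i ≠ 0}.ncard

end RingCheck

/-!
Read `e` on the residue `x` through its representative `x.val ∈ [0, m)`. Since the arcs
`(a (2j), a (2j+1)]` are disjoint and each is the difference of two "half-lines",
`e x = #{i < 2k | a i < x.val} mod 2`. Passing from `x.val` to `x.val + 1` this count grows by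
one exactly when `x.val` is some `a i`, so `∂e x ≠ 0` iff `x ∈ A`. At the wrap-around
`x.val + 1 = m` the count jumps from `2k` back to `0`, which is invisible mod 2.
-/

open Finset

theorem Finset.sum_boole_eq_ite_exists {ι R : Type*} [AddCommMonoidWithOne R] {s : Finset ι}
    {p : ι → Prop} [DecidablePred p] (hp : ∀ i ∈ s, ∀ j ∈ s, p i → p j → i = j) :
    ∑ i ∈ s, (if p i then (1 : R) else 0) = if ∃ i ∈ s, p i then 1 else 0 := by
  split_ifs with h
  · obtain ⟨i, hi, hpi⟩ := h
    rw [sum_eq_single_of_mem i hi fun j hj hji => if_neg fun hpj => hji (hp j hj i hi hpj hpi),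
      if_pos hpi]
  · exact sum_eq_zero fun i hi => if_neg fun hpi => h ⟨i, hi, hpi⟩

theorem Finset.sum_range_two_mul {M : Type*} [AddCommMonoid M] (f : ℕ → M) (k : ℕ) :
    ∑ i ∈ range (2 * k), f i = ∑ j ∈ range k, (f (2 * j) + f (2 * j + 1)) := by
  induction k with
  | zero => simp
  | succ k ih => rw [Nat.mul_succ, sum_range_succ, sum_range_succ, ih, sum_range_succ, add_assoc]

theorem ZMod.exists_natCast_mem_Icc_iff {m : ℕ} [NeZero m] {x : ZMod m} {l u : ℕ} (hu : u < m) :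
    (∃ n : ℕ, l ≤ n ∧ n ≤ u ∧ x = n) ↔ l ≤ x.val ∧ x.val ≤ u := by
  constructor
  · rintro ⟨n, hl, hu', rfl⟩
    rw [ZMod.val_natCast_of_lt (hu'.trans_lt hu)]
    exact ⟨hl, hu'⟩
  · rintro ⟨hl, hu'⟩
    exact ⟨x.val, hl, hu', (ZMod.natCast_zmod_val x).symm⟩

theorem ZMod.eq_natCast_iff_val_eq {m : ℕ} [NeZero m] {x : ZMod m} {n : ℕ} (hn : n < m) :
    x = n ↔ x.val = n := by
  constructor
  · rintro rfl
    exact ZMod.val_natCast_of_lt hn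
  · intro h
    rw [← h, ZMod.natCast_zmod_val]

theorem ZMod.apply_val_add_one {m : ℕ} [NeZero m] {β : Type*} {f : ℕ → β} (hf : f m = f 0)
    (x : ZMod m) : f (x + 1).val = f (x.val + 1) := by
  have hx : x + 1 = ((x.val + 1 : ℕ) : ZMod m) := by push_cast [ZMod.natCast_zmod_val]; rfl
  rw [hx, ZMod.val_natCast]
  rcases Nat.lt_or_ge (x.val + 1) m with h | h
  · rw [Nat.mod_eq_of_lt h]
  · rw [show x.val + 1 = m by have := x.val_lt; omega, Nat.mod_self, hf]

namespace RingCheck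

def belowParity {α : Type*} [LinearOrder α] (a : ℕ → α) (n : ℕ) (v : α) : ZMod 2 :=
  ∑ i ∈ range n, if a i < v then 1 else 0

section Arcs

variable {α : Type*} [LinearOrder α] {a : ℕ → α} {k : ℕ}

theorem arc_index_unique (ha : StrictMonoOn a (Set.Iio (2 * k))) {v : α} {j j' : ℕ}
    (hj : j < k) (hj' : j' < k) (hv : a (2 * j) < v ∧ v ≤ a (2 * j + 1))
    (hv' : a (2 * j') < v ∧ v ≤ a (2 * j' + 1)) : j = j' := by
  by_contra hne
  wlog hlt : j < j' generalizing j j'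
  · exact this hj' hj hv' hv (Ne.symm hne) (by omega)
  have := ha (by simp; omega) (by simp; omega) (show 2 * j + 1 < 2 * j' by omega)
  exact (hv.2.trans_lt (this.trans hv'.1)).false

theorem ite_mem_arc_eq_add (ha : StrictMonoOn a (Set.Iio (2 * k))) {j : ℕ} (hj : j < k) (v : α) :
    (if a (2 * j) < v ∧ v ≤ a (2 * j + 1) then (1 : ZMod 2) else 0) =
      (if a (2 * j) < v then 1 else 0) + if a (2 * j + 1) < v then 1 else 0 := by
  have hlt : a (2 * j) < a (2 * j + 1) := ha (by simp; omega) (by simp; omega) (by omega)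
  by_cases h₁ : a (2 * j) < v <;> by_cases h₂ : a (2 * j + 1) < v
  · simp [h₁, h₂, not_le.mpr h₂]; decide
  · simp [h₁, h₂, not_lt.mp h₂]
  · exact absurd (hlt.trans h₂) h₁
  · simp [h₁, h₂]

theorem ite_exists_mem_arc_eq_belowParity (ha : StrictMonoOn a (Set.Iio (2 * k))) (v : α) :
    (if ∃ j < k, a (2 * j) < v ∧ v ≤ a (2 * j + 1) then (1 : ZMod 2) else 0) =
      belowParity a (2 * k) v := by
  have hdisj : ∀ j ∈ range k, ∀ j' ∈ range k, (a (2 * j) < v ∧ v ≤ a (2 * j + 1)) →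
      (a (2 * j') < v ∧ v ≤ a (2 * j' + 1)) → j = j' := fun j hj j' hj' =>
    arc_index_unique ha (mem_range.mp hj) (mem_range.mp hj')
  simp only [← mem_range, ← sum_boole_eq_ite_exists hdisj, belowParity,
    sum_range_two_mul]
  exact sum_congr rfl fun j hj => ite_mem_arc_eq_add ha (mem_range.mp hj) v

end Arcs

theorem ite_lt_add_ite_lt_succ (i v : ℕ) :
    ((if i < v then 1 else 0) + if i < v + 1 then 1 else 0 : ZMod 2) = if i = v then 1 else 0 := by
  rcases lt_trichotomy i v with h | rfl | h
  · simp [h, h.ne, h.trans (lt_add_one v)]; decide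
  · simp
  · simp [h.ne', h.not_gt, (Nat.succ_le_of_lt h).not_gt]

theorem belowParity_add_belowParity_succ {a : ℕ → ℕ} {n : ℕ} (ha : Set.InjOn a (Set.Iio n))
    (v : ℕ) : belowParity a n v + belowParity a n (v + 1) = if ∃ i < n, a i = v then 1 else 0 := by
  rw [belowParity, belowParity, ← sum_add_distrib, sum_congr rfl fun i _ => ite_lt_add_ite_lt_succ (a i) v]
  simp only [← mem_range]
  exact sum_boole_eq_ite_exists fun i hi j hj (hiv : a i = v) (hjv : a j = v) =>
    ha (mem_range.mp hi) (mem_range.mp hj) (hiv.trans hjv.symm)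

theorem belowParity_zero {a : ℕ → ℕ} (n : ℕ) : belowParity a n 0 = 0 := by
  simp [belowParity]

theorem belowParity_two_mul_of_lt {α : Type*} [LinearOrder α] {a : ℕ → α} {k : ℕ} {v : α}
    (hv : ∀ i < 2 * k, a i < v) : belowParity a (2 * k) v = 0 := by
  rw [belowParity, sum_congr rfl fun i hi => if_pos (hv i (mem_range.mp hi)), sum_const, card_range, nsmul_one, ZMod.natCast_eq_zero_iff]
  exact dvd_mul_right 2 k

end RingCheck

open RingCheck

/-- Explicit arc construction realizing an even triggered set: if
`a 0 < a 1 < ⋯ < a (2k-1) < m` enumerates `A ⊆ {0, …, m-1}` and `e` is the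
indicator of the union of arcs `{a (2j)+1, …, a (2j+1)}` (as residues mod `m`),
then the triggered set `supp ∂e` equals `A` (as residues mod `m`). -/
theorem ring_arc_construction (m k : ℕ) (hm : 1 ≤ m) (a : ℕ → ℕ)
    (hmono : ∀ i j, i < j → j < 2 * k → a i < a j)
    (hlt : ∀ i, i < 2 * k → a i < m)
    (A : Set (ZMod m)) (hA : A = {x | ∃ i, i < 2 * k ∧ x = ((a i : ℕ) : ZMod m)})
    (e : ZMod m → ZMod 2)
    (he : e = fun x => if ∃ j, j < k ∧ ∃ n : ℕ,
        a (2 * j) + 1 ≤ n ∧ n ≤ a (2 * j + 1) ∧ x = (n : ZMod m) then 1 else 0) :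
    {j | RingCheck.bdy e j ≠ 0} = A := by
  have : NeZero m := ⟨by omega⟩
  have ha : StrictMonoOn a (Set.Iio (2 * k)) := fun i _ j hj hij => hmono i j hij hj
  have he_val : ∀ x, e x = belowParity a (2 * k) x.val := fun x => by
    rw [he, ← ite_exists_mem_arc_eq_belowParity ha]
    refine if_congr (exists_congr fun j => and_congr_right fun hj => ?_) rfl rfl
    rw [ZMod.exists_natCast_mem_Icc_iff (hlt _ (by omega)), Nat.add_one_le_iff]
  have hwrap : belowParity a (2 * k) m = belowParity a (2 * k) 0 := by
    rw [belowParity_two_mul_of_lt hlt, belowParity_zero]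
  ext x
  simp only [Set.mem_ofPred_eq, bdy, he_val, ZMod.apply_val_add_one hwrap,
    belowParity_add_belowParity_succ ha.injOn, hA]
  simp only [ne_eq, ite_eq_right_iff, one_ne_zero, imp_false, not_not]
  exact exists_congr fun i => and_congr_right fun hi => by
    rw [ZMod.eq_natCast_iff_val_eq (hlt i hi), eq_comm]
end
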